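/- Let v₀ > 0, let u : ℝ² → ℝ² be continuously differentiable, and let (r, θ) : I → ℝ² × ℝ be a differentiable solution of the front-element dynamics on an open interval I. Then the function φ(t) := ṙ(t) · n̂(θ(t)) = (u(r(t)) + v₀ n̂(θ(t))) · n̂(θ(t)) is differentiable and satisfies, for all t ∈ I, φ'(t) = φ(t) · (n̂(θ(t)) · (Du(r(t)) n̂(θ(t)))). -/

import Mathlib

/-!
In the moving orthonormal frame write `ṙ = φ n̂ + ψ ĝ`. Since `dn̂/dθ = ĝ ⊥ n̂`, one gets
`φ' = n̂·(Du ṙ) + θ̇ ψ = φ n̂·(Du n̂) + ψ n̂·(Du ĝ) + θ̇ ψ`, and the front-element equation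
`θ̇ = −n̂·(Du ĝ)` makes the last two terms cancel.
-/

noncomputable section

open Real Polynomial

/-- Points in the plane, with the Euclidean norm. -/
abbrev Pt : Type := EuclideanSpace ℝ (Fin 2)

/-- Build a point of the plane from two coordinates. -/
def vec2 (a b : ℝ) : Pt := (WithLp.equiv 2 (Fin 2 → ℝ)).symm ![a, b]

/-- Front tangent direction ĝ(θ) = (cos θ, sin θ). -/
def ghat (θ : ℝ) : Pt := vec2 (Real.cos θ) (Real.sin θ)

/-- Front normal (burning) direction n̂(θ) = (sin θ, −cos θ). -/
def nhat (θ : ℝ) : Pt := vec2 (Real.sin θ) (-(Real.cos θ))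

/-- Euclidean dot product on the plane. -/
def dot (v w : Pt) : ℝ := v 0 * w 0 + v 1 * w 1

/-- The Jacobian matrix Du(r) of a planar vector field. -/
def jacOf (u : Pt → Pt) (r : Pt) : Matrix (Fin 2) (Fin 2) ℝ :=
  fun i j => fderiv ℝ u r (EuclideanSpace.single j 1) i

/-- Action of a 2×2 matrix on a point of the plane. -/
def mulVec2 (M : Matrix (Fin 2) (Fin 2) ℝ) (v : Pt) : Pt :=
  vec2 (M 0 0 * v 0 + M 0 1 * v 1) (M 1 0 * v 0 + M 1 1 * v 1)

/-- The three-dimensional front-element vector field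
    F(r, θ) = (u(r) + v₀ n̂(θ), −n̂(θ)·(Du(r) ĝ(θ))). -/
def frontField (v₀ : ℝ) (u : Pt → Pt) (q : Pt × ℝ) : Pt × ℝ :=
  (u q.1 + v₀ • nhat q.2, -(dot (nhat q.2) (mulVec2 (jacOf u q.1) (ghat q.2))))

/-- The standard basis of ℝ² × ℝ ≃ ℝ³. -/
def basis3 : Fin 3 → Pt × ℝ :=
  ![(EuclideanSpace.single 0 1, 0), (EuclideanSpace.single 1 1, 0), ((0 : Pt), 1)]

/-- Components of a vector in ℝ² × ℝ ≃ ℝ³. -/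
def comp3 (p : Pt × ℝ) : Fin 3 → ℝ := ![p.1 0, p.1 1, p.2]

/-- The 3×3 Jacobian matrix of the front-element field at a point of ℝ² × ℝ. -/
def jac3 (v₀ : ℝ) (u : Pt → Pt) (q : Pt × ℝ) : Matrix (Fin 3) (Fin 3) ℝ :=
  fun i j => comp3 (fderiv ℝ (frontField v₀ u) q (basis3 j)) i

/-- Second partial derivative ∂ⱼ∂ₖuᵢ(r). -/
def d2 (u : Pt → Pt) (r : Pt) (i j k : Fin 2) : ℝ :=
  fderiv ℝ (fun x => fderiv ℝ u x (EuclideanSpace.single k 1) i) r (EuclideanSpace.single j 1)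

/-- Divergence-free: ∂₁u₁ + ∂₂u₂ = 0 everywhere. -/
def divFree (u : Pt → Pt) : Prop := ∀ r : Pt, jacOf u r 0 0 + jacOf u r 1 1 = 0

/-- Rotation of a planar vector by +π/2. -/
def perp (v : Pt) : Pt := vec2 (-(v 1)) (v 0)

/-- The velocity field generated by a stream function: u = (∂Ψ/∂y, −∂Ψ/∂x). -/
def uOf (Ψ : Pt → ℝ) (x : Pt) : Pt :=
  vec2 (fderiv ℝ Ψ x (EuclideanSpace.single 1 1)) (-(fderiv ℝ Ψ x (EuclideanSpace.single 0 1)))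

/-- Polar angle of a point of the plane. -/
def angOf (x : Pt) : ℝ := Complex.arg ⟨x 0, x 1⟩

open RealInnerProductSpace

theorem dot_eq_inner (v w : Pt) : dot v w = ⟪v, w⟫ := by
  simp [dot, PiLp.inner_apply, Fin.sum_univ_two, mul_comm]

theorem vec2_eq (x y : ℝ) :
    vec2 x y = x • EuclideanSpace.single 0 1 + y • EuclideanSpace.single 1 1 := by
  ext i; fin_cases i <;> simp [vec2]

theorem mulVec2_jacOf (u : Pt → Pt) (r w : Pt) : mulVec2 (jacOf u r) w = fderiv ℝ u r w := by
  have hw : w = w 0 • EuclideanSpace.single 0 1 + w 1 • EuclideanSpace.single 1 1 := by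
    ext i; fin_cases i <;> simp
  conv_rhs => rw [hw]
  ext i; fin_cases i <;> simp [mulVec2, jacOf, vec2, mul_comm]

theorem hasDerivAt_nhat (θ : ℝ) : HasDerivAt nhat (ghat θ) θ := by
  have h : nhat = fun s => Real.sin s • EuclideanSpace.single (0 : Fin 2) (1 : ℝ)
      + (-Real.cos s) • EuclideanSpace.single 1 1 := funext fun s => vec2_eq _ _
  rw [h, ghat, vec2_eq]
  exact ((Real.hasDerivAt_sin θ).smul_const _).add
    (by simpa using ((Real.hasDerivAt_cos θ).neg).smul_const _)

theorem inner_nhat_ghat (θ : ℝ) : ⟪nhat θ, ghat θ⟫ = 0 := by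
  simp [← dot_eq_inner, dot, ghat, nhat, vec2]; ring

theorem eq_inner_nhat_smul_add_inner_ghat_smul (v : Pt) (θ : ℝ) :
    v = ⟪v, nhat θ⟫ • nhat θ + ⟪v, ghat θ⟫ • ghat θ := by
  simp only [← dot_eq_inner]
  ext i; fin_cases i <;> simp [dot, ghat, nhat, vec2] <;>
    linear_combination (-(v _)) * Real.sin_sq_add_cos_sq θ

theorem inner_nhat_map_sub (L : Pt →L[ℝ] Pt) (v : Pt) (θ : ℝ) :
    ⟪nhat θ, L v⟫ - ⟪nhat θ, L (ghat θ)⟫ * ⟪v, ghat θ⟫ = ⟪v, nhat θ⟫ * ⟪nhat θ, L (nhat θ)⟫ := by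
  nth_rewrite 1 [eq_inner_nhat_smul_add_inner_ghat_smul v θ]
  simp only [map_add, map_smul, inner_add_right, inner_smul_right]
  ring

theorem sliding_defect_evolution_general
    (v₀ : ℝ) (u : Pt → Pt) (hu : ContDiff ℝ 1 u)
    (a b : ℝ) (r : ℝ → Pt) (θ : ℝ → ℝ)
    (hr : ∀ t ∈ Set.Ioo a b, HasDerivAt r (u (r t) + v₀ • nhat (θ t)) t)
    (hθ : ∀ t ∈ Set.Ioo a b,
      HasDerivAt θ (-(dot (nhat (θ t)) (mulVec2 (jacOf u (r t)) (ghat (θ t))))) t) :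
    ∀ t ∈ Set.Ioo a b,
      HasDerivAt (fun s => dot (u (r s) + v₀ • nhat (θ s)) (nhat (θ s)))
        (dot (u (r t) + v₀ • nhat (θ t)) (nhat (θ t)) *
          dot (nhat (θ t)) (mulVec2 (jacOf u (r t)) (nhat (θ t)))) t := by
  intro t ht
  simp only [dot_eq_inner, mulVec2_jacOf] at hθ ⊢
  have hn := (hasDerivAt_nhat (θ t)).scomp t (hθ t ht)
  have hur := (hu.differentiable one_ne_zero (r t)).hasFDerivAt.comp_hasDerivAt t (hr t ht)
  refine ((hur.add (hn.const_smul v₀)).inner ℝ hn).congr_deriv ?_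
  have hcancel := inner_nhat_map_sub (fderiv ℝ u (r t)) (u (r t) + v₀ • nhat (θ t)) (θ t)
  simp only [inner_add_left, inner_add_right, inner_smul_left, inner_smul_right, conj_trivial,
    real_inner_comm (nhat (θ t)), inner_nhat_ghat, Function.comp_apply, Pi.add_apply,
    Pi.smul_apply] at hcancel ⊢
  linarith

/-- Along a solution of the front-element dynamics, the quantity
φ(t) = ṙ(t)·n̂(θ(t)) is differentiable with φ'(t) = φ(t) (n̂·(Du n̂)). -/
theorem sliding_defect_evolution
    (v₀ : ℝ) (hv₀ : 0 < v₀) (u : Pt → Pt) (hu : ContDiff ℝ 1 u)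
    (a b : ℝ) (r : ℝ → Pt) (θ : ℝ → ℝ)
    (hr : ∀ t ∈ Set.Ioo a b, HasDerivAt r (u (r t) + v₀ • nhat (θ t)) t)
    (hθ : ∀ t ∈ Set.Ioo a b,
      HasDerivAt θ (-(dot (nhat (θ t)) (mulVec2 (jacOf u (r t)) (ghat (θ t))))) t) :
    ∀ t ∈ Set.Ioo a b,
      HasDerivAt (fun s => dot (u (r s) + v₀ • nhat (θ s)) (nhat (θ s)))
        (dot (u (r t) + v₀ • nhat (θ t)) (nhat (θ t)) *
          dot (nhat (θ t)) (mulVec2 (jacOf u (r t)) (nhat (θ t)))) t :=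
  sliding_defect_evolution_general v₀ u hu a b r θ hr hθ
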